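/- If a countable group Γ contains a subgroup isomorphic to the free group on two generators, then Γ is not amenable: there is no left-invariant mean on Γ, i.e., no ℝ-linear functional m on the space of bounded functions Γ → ℝ such that m(f) ≥ 0 whenever f ≥ 0 pointwise, m(1) = 1, and m(x ↦ f(g⁻¹x)) = m(f) for all g ∈ Γ and all bounded f. (Stated in the paper: groups containing the free group on two generators are not amenable.) -/

import Mathlib

/-- The space of bounded real-valued functions on `Γ`, as a submodule of `Γ → ℝ`. -/
def BoundedFun (Γ : Type*) : Submodule ℝ (Γ → ℝ) where
  carrier := {f | ∃ C : ℝ, ∀ x, |f x| ≤ C}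
  add_mem' := by
    rintro f g ⟨C, hC⟩ ⟨D, hD⟩
    exact ⟨C + D, fun x => (abs_add_le _ _).trans (add_le_add (hC x) (hD x))⟩
  zero_mem' := ⟨0, fun x => by simp⟩
  smul_mem' := by
    rintro c f ⟨C, hC⟩
    exact ⟨|c| * C, fun x => by
      simpa [abs_mul] using mul_le_mul_of_nonneg_left (hC x) (abs_nonneg c)⟩

/-- `m` is a left-invariant mean on the group `Γ`: an `ℝ`-linear functional on the space of
bounded functions `Γ → ℝ` which is nonnegative on nonnegative functions, sends the constant
function `1` to `1`, and is invariant under left translation. -/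
def IsInvariantMean (Γ : Type*) [Group Γ] (m : BoundedFun Γ →ₗ[ℝ] ℝ) : Prop :=
  (∀ f : BoundedFun Γ, (∀ x, 0 ≤ (f : Γ → ℝ) x) → 0 ≤ m f) ∧
  (m ⟨fun _ => (1 : ℝ), ⟨1, fun x => by norm_num⟩⟩ = 1) ∧
  (∀ (g : Γ) (f : BoundedFun Γ),
    m ⟨fun x => (f : Γ → ℝ) (g⁻¹ * x), by
      obtain ⟨C, hC⟩ := f.2
      exact ⟨C, fun x => hC _⟩⟩ = m f)

/-- A group is amenable if it admits a left-invariant mean. -/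
def IsAmenable (Γ : Type*) [Group Γ] : Prop :=
  ∃ m : BoundedFun Γ →ₗ[ℝ] ℝ, IsInvariantMean Γ m

/-!
An invariant mean `m` turns into a finitely additive, translation-invariant probability on
subsets, `μ s = m 1_s`. In the free group on `a ≠ b`, the four sets of reduced words starting with
`a`, `a⁻¹`, `b`, `b⁻¹` are disjoint, yet each letter `c` satisfies
`startsWith c ∪ c • startsWith c⁻¹ = univ`, so the four measures add up to at most `1` and to
at least `2`. Amenability passes to subgroups: choosing a right transversal `T` of `H`, the
projection `Γ = H T → H` is `H`-equivariant, and pulling bounded functions back along it turns an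
invariant mean on `Γ` into one on `H`.
-/

open scoped Pointwise

namespace BoundedFun

variable {α β : Type*}

def comap (k : α → β) : BoundedFun β →ₗ[ℝ] BoundedFun α where
  toFun f := ⟨(f : β → ℝ) ∘ k, by
    obtain ⟨C, hC⟩ := f.2
    exact ⟨C, fun x => hC (k x)⟩⟩
  map_add' _ _ := rfl
  map_smul' _ _ := rfl

noncomputable def indicator (s : Set α) : BoundedFun α :=
  ⟨s.indicator 1, 1, fun x => by by_cases hx : x ∈ s <;> simp [hx]⟩

lemma indicator_smul {G : Type*} [Group G] (g : G) (s : Set G) :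
    indicator (g • s) = comap (g⁻¹ * ·) (indicator s) := by
  classical
  ext x
  simp only [comap, indicator, LinearMap.coe_mk, AddHom.coe_mk, Function.comp_apply]
  rw [Set.indicator_apply, Set.indicator_apply, Set.mem_smul_set_iff_inv_smul_mem, smul_eq_mul]
  rfl

end BoundedFun

namespace IsInvariantMean

variable {G : Type*} [Group G] {m : BoundedFun G →ₗ[ℝ] ℝ}

lemma mono (hm : IsInvariantMean G m) {f f' : BoundedFun G}
    (h : ∀ x, (f : G → ℝ) x ≤ (f' : G → ℝ) x) : m f ≤ m f' := by
  have : 0 ≤ m (f' - f) := hm.1 _ fun x => sub_nonneg.2 (h x)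
  rwa [map_sub, sub_nonneg] at this

lemma map_indicator_smul (hm : IsInvariantMean G m) (g : G) (s : Set G) :
    m (BoundedFun.indicator (g • s)) = m (BoundedFun.indicator s) := by
  rw [BoundedFun.indicator_smul]
  exact hm.2.2 g _

lemma one_le_add_of_union_eq_univ (hm : IsInvariantMean G m) {s t : Set G}
    (h : s ∪ t = Set.univ) :
    1 ≤ m (BoundedFun.indicator s) + m (BoundedFun.indicator t) := by
  rw [← map_add, ← hm.2.1]
  refine hm.mono fun x => ?_
  simp only [Submodule.coe_add, Pi.add_apply, BoundedFun.indicator,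
    ← Set.indicator_union_add_inter_apply, h, Set.indicator_univ, Pi.one_apply]
  exact le_add_of_nonneg_right (Set.indicator_nonneg (fun _ _ => zero_le_one) x)

lemma sum_le_one {ι : Type*} (hm : IsInvariantMean G m) (T : Finset ι) {s : ι → Set G}
    (hs : (T : Set ι).PairwiseDisjoint s) : ∑ i ∈ T, m (BoundedFun.indicator (s i)) ≤ 1 := by
  rw [← map_sum, ← hm.2.1]
  refine hm.mono fun x => ?_
  simp only [Submodule.coe_sum, Finset.sum_apply, BoundedFun.indicator,
    ← Finset.indicator_biUnion_apply T s hs]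
  exact Set.indicator_apply_le' (fun _ => le_rfl) (fun _ => zero_le_one)

end IsInvariantMean

section Transfer

variable {G Γ : Type*} [Group G] [Group Γ]

lemma IsInvariantMean.comp_comap {m : BoundedFun Γ →ₗ[ℝ] ℝ} (hm : IsInvariantMean Γ m)
    (φ : G →* Γ) (κ : Γ → G) (hκ : ∀ g x, κ (φ g * x) = g * κ x) :
    IsInvariantMean G (m ∘ₗ BoundedFun.comap κ) := by
  refine ⟨fun f hf => hm.1 _ fun x => hf (κ x), hm.2.1, fun g f => ?_⟩
  have : BoundedFun.comap κ (BoundedFun.comap (g⁻¹ * ·) f) =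
      BoundedFun.comap ((φ g)⁻¹ * ·) (BoundedFun.comap κ f) := by
    ext x
    simp only [BoundedFun.comap, LinearMap.coe_mk, AddHom.coe_mk, Function.comp_apply,
      ← map_inv, hκ]
  exact (congrArg m this).trans (hm.2.2 (φ g) _)

lemma IsAmenable.of_equivariant (φ : G →* Γ) (κ : Γ → G) (hκ : ∀ g x, κ (φ g * x) = g * κ x)
    (h : IsAmenable Γ) : IsAmenable G :=
  let ⟨_, hm⟩ := h
  ⟨_, hm.comp_comap φ κ hκ⟩

lemma IsAmenable.subgroup (H : Subgroup Γ) (h : IsAmenable Γ) : IsAmenable H := by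
  obtain ⟨T, hT, -⟩ := H.exists_isComplement_right 1
  exact h.of_equivariant H.subtype (fun x => (hT.equiv x).1)
    fun g x => congrArg Prod.fst (hT.equiv_mul_left g x)

lemma IsAmenable.of_mulEquiv (e : G ≃* Γ) (h : IsAmenable Γ) : IsAmenable G :=
  h.of_equivariant e.toMonoidHom e.symm fun g x => by simp

end Transfer

namespace FreeGroup

lemma startsWith_union_of_smul_startsWith_eq_univ {α : Type*} [DecidableEq α] (a : α) :
    startsWith (a, true) ∪ of a • startsWith (a, false) = Set.univ := by
  refine Set.eq_univ_of_forall fun x => or_iff_not_imp_left.2 fun hx => ?_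
  rw [Set.mem_smul_set_iff_inv_smul_mem, smul_eq_mul,
    show (of a)⁻¹ = mk [(a, false)] by simp [of, inv_mk, invRev]]
  exact startsWith_mk_mul (w := (a, false)) x hx

lemma not_isAmenable {α : Type*} [Nontrivial α] : ¬ IsAmenable (FreeGroup α) := by
  classical
  rintro ⟨m, hm⟩
  obtain ⟨a, b, hab⟩ := exists_pair_ne α
  have hdisj : (({a, b} ×ˢ .univ : Finset (α × Bool)) : Set (α × Bool)).PairwiseDisjoint
      startsWith := fun _ _ _ _ hne => startsWith.disjoint_iff_ne.2 hne
  have hle := hm.sum_le_one _ hdisj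
  have hge (c : α) : 1 ≤ ∑ j, m (BoundedFun.indicator (startsWith (c, j))) := by
    simpa [hm.map_indicator_smul] using
      hm.one_le_add_of_union_eq_univ (startsWith_union_of_smul_startsWith_eq_univ c)
  rw [Finset.sum_product, Finset.sum_pair hab] at hle
  linarith [hge a, hge b]

end FreeGroup

theorem not_isAmenable_of_free_subgroup_general {Γ : Type*} [Group Γ]
    (H : Subgroup Γ) (hH : Nonempty (H ≃* FreeGroup (Fin 2))) :
    ¬ IsAmenable Γ := fun h =>
  FreeGroup.not_isAmenable ((h.subgroup H).of_mulEquiv hH.some.symm)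

/-- **Groups containing a free group on two generators are not amenable.**  If a countable
group `Γ` has a subgroup isomorphic to the free group on two generators, then `Γ` admits no
left-invariant mean. -/
theorem not_isAmenable_of_free_subgroup {Γ : Type*} [Group Γ] [Countable Γ]
    (H : Subgroup Γ) (hH : Nonempty (H ≃* FreeGroup (Fin 2))) :
    ¬ IsAmenable Γ :=
  not_isAmenable_of_free_subgroup_general H hH
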